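/- Let d be a positive natural number and let L : (Fin d → ℝ) → ℝ be a differentiable function on EuclideanSpace ℝ (Fin d) that is L₁-Lipschitz and whose gradient ∇L is L₂-Lipschitz, with L₁, L₂ > 0. Let θ₀, θ_t, θ_{t+1} ∈ ℝ^d satisfy ‖θ_t‖ ≤ Q, where Q, β ≥ 0. Let γ̂ ∈ ℝ^d have every component in [0,1], and define m_t = θ₀ + γ̂ ⊙ (θ_t − θ₀) and m_{t+1} = θ₀ + γ̂ ⊙ (θ_{t+1} − θ₀). Define γ'_t = γ̂ − β·(θ_t ⊙ ∇L(m_t)) and γ'_{t+1} = γ̂ − β·(θ_{t+1} ⊙ ∇L(m_{t+1})). Then ‖γ'_t − γ'_{t+1}‖ ≤ β(Q·L₂ + L₁)·‖θ_t − θ_{t+1}‖. -/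
import Mathlib


/-- Componentwise (Hadamard) multiplication on `EuclideanSpace ℝ (Fin d)`. -/
noncomputable def hadamard {d : ℕ} (x y : EuclideanSpace ℝ (Fin d)) :
    EuclideanSpace ℝ (Fin d) :=
  (WithLp.equiv 2 (Fin d → ℝ)).symm (fun i => x i * y i)

lemma hadamard_apply {d : ℕ} (x y : EuclideanSpace ℝ (Fin d)) (i : Fin d) :
    hadamard x y i = x i * y i := rfl

lemma coord_le_norm {d : ℕ} (x : EuclideanSpace ℝ (Fin d)) (i : Fin d) :
    |x i| ≤ ‖x‖ := by
  rw [EuclideanSpace.norm_eq]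
  have h1 : |x i| = Real.sqrt (‖x i‖ ^ 2) := by
    rw [Real.sqrt_sq (norm_nonneg _), Real.norm_eq_abs]
  rw [h1]
  exact Real.sqrt_le_sqrt (Finset.single_le_sum
    (fun j _ => sq_nonneg ‖x j‖) (Finset.mem_univ i))

lemma hadamard_norm_le {d : ℕ} (x y : EuclideanSpace ℝ (Fin d)) :
    ‖hadamard x y‖ ≤ ‖x‖ * ‖y‖ := by
  rw [EuclideanSpace.norm_eq]
  have h : ∀ i ∈ Finset.univ, ‖hadamard x y i‖ ^ 2 ≤ ‖x‖ ^ 2 * ‖y i‖ ^ 2 := by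
    intro i _
    rw [hadamard_apply, norm_mul]
    have hx := coord_le_norm x i
    have hx0 : (0:ℝ) ≤ |x i| := abs_nonneg _
    have hy0 : (0:ℝ) ≤ ‖y i‖ := norm_nonneg _
    rw [Real.norm_eq_abs]
    have h2 : |x i| * ‖y i‖ ≤ ‖x‖ * ‖y i‖ := mul_le_mul_of_nonneg_right hx hy0
    calc (|x i| * ‖y i‖) ^ 2 ≤ (‖x‖ * ‖y i‖) ^ 2 :=
          pow_le_pow_left₀ (mul_nonneg hx0 hy0) h2 2
      _ = ‖x‖ ^ 2 * ‖y i‖ ^ 2 := by ring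
  calc Real.sqrt (∑ i, ‖hadamard x y i‖ ^ 2) ≤
      Real.sqrt (∑ i, ‖x‖ ^ 2 * ‖y i‖ ^ 2) := Real.sqrt_le_sqrt (Finset.sum_le_sum h)
    _ = Real.sqrt (‖x‖ ^ 2 * ∑ i, ‖y i‖ ^ 2) := by rw [Finset.mul_sum]
    _ = ‖x‖ * Real.sqrt (∑ i, ‖y i‖ ^ 2) := by
        rw [Real.sqrt_mul (sq_nonneg _), Real.sqrt_sq (norm_nonneg _)]
    _ = ‖x‖ * ‖y‖ := by rw [← EuclideanSpace.norm_eq]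

lemma hadamard_mask_norm_le {d : ℕ} (γ v : EuclideanSpace ℝ (Fin d))
    (hγ : ∀ i, γ i ∈ Set.Icc (0 : ℝ) 1) :
    ‖hadamard γ v‖ ≤ ‖v‖ := by
  rw [EuclideanSpace.norm_eq, EuclideanSpace.norm_eq]
  apply Real.sqrt_le_sqrt
  apply Finset.sum_le_sum
  intro i _
  rw [hadamard_apply, norm_mul, Real.norm_eq_abs]
  have h1 := (hγ i).1
  have h2 := (hγ i).2
  have h3 : |γ i| ≤ 1 := by rw [abs_of_nonneg h1]; exact h2
  have h4 : (0:ℝ) ≤ ‖v i‖ := norm_nonneg _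
  have h5 : |γ i| * ‖v i‖ ≤ ‖v i‖ := by
    calc |γ i| * ‖v i‖ ≤ 1 * ‖v i‖ := mul_le_mul_of_nonneg_right h3 h4
      _ = ‖v i‖ := one_mul _
  calc (|γ i| * ‖v i‖) ^ 2 ≤ ‖v i‖ ^ 2 :=
        pow_le_pow_left₀ (mul_nonneg (abs_nonneg _) h4) h5 2

/-- penultimate inequality in the proof of Theorem 1: the
difference of the one-step mask updates is bounded by
`β (Q L₂ + L₁) ‖θ_t − θ_{t+1}‖`. -/
theorem mask_update_diff_bound (d : ℕ) (hd : 0 < d)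
    (L : EuclideanSpace ℝ (Fin d) → ℝ)
    (L₁ L₂ Q β : ℝ) (hL₁ : 0 < L₁) (hL₂ : 0 < L₂)
    (hQ : 0 ≤ Q) (hβ : 0 ≤ β)
    (hdiff : Differentiable ℝ L)
    (hLip : ∀ x y : EuclideanSpace ℝ (Fin d), |L x - L y| ≤ L₁ * ‖x - y‖)
    (hgradLip : ∀ x y : EuclideanSpace ℝ (Fin d),
      ‖gradient L x - gradient L y‖ ≤ L₂ * ‖x - y‖)
    (θ₀ θt θt1 : EuclideanSpace ℝ (Fin d)) (hθt : ‖θt‖ ≤ Q)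
    (γhat : EuclideanSpace ℝ (Fin d)) (hγ : ∀ i, γhat i ∈ Set.Icc (0 : ℝ) 1)
    (mt mt1 : EuclideanSpace ℝ (Fin d))
    (hmt : mt = θ₀ + hadamard γhat (θt - θ₀))
    (hmt1 : mt1 = θ₀ + hadamard γhat (θt1 - θ₀))
    (γt' γt1' : EuclideanSpace ℝ (Fin d))
    (hγt' : γt' = γhat - β • hadamard θt (gradient L mt))
    (hγt1' : γt1' = γhat - β • hadamard θt1 (gradient L mt1)) :
    ‖γt' - γt1'‖ ≤ β * (Q * L₂ + L₁) * ‖θt - θt1‖ := by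
  -- gradient norm bound from Lipschitz
  have hLipW : LipschitzWith L₁.toNNReal L := by
    apply LipschitzWith.of_dist_le_mul
    intro x y
    rw [Real.dist_eq, Real.coe_toNNReal _ hL₁.le, dist_eq_norm]
    exact hLip x y
  have hgradbound : ∀ x, ‖gradient L x‖ ≤ L₁ := by
    intro x
    have h1 : ‖gradient L x‖ = ‖fderiv ℝ L x‖ :=
      (InnerProductSpace.toDual ℝ _).symm.norm_map _
    rw [h1]
    have := norm_fderiv_le_of_lipschitz ℝ hLipW (x₀ := x)
    rwa [Real.coe_toNNReal _ hL₁.le] at this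
  -- difference of masks
  have hmdiff : mt - mt1 = hadamard γhat (θt - θt1) := by
    rw [hmt, hmt1]
    ext i
    simp only [PiLp.sub_apply, PiLp.add_apply, hadamard_apply]
    ring
  have hmnorm : ‖mt - mt1‖ ≤ ‖θt - θt1‖ := by
    rw [hmdiff]; exact hadamard_mask_norm_le _ _ hγ
  set g0 := gradient L mt with hg0
  set g1 := gradient L mt1 with hg1
  -- main decomposition
  have hdiff2 : γt' - γt1' = β • (hadamard θt1 g1 - hadamard θt g0) := by
    rw [hγt', hγt1', smul_sub]
    abel
  rw [hdiff2, norm_smul, Real.norm_eq_abs, abs_of_nonneg hβ]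
  have hsplit : hadamard θt1 g1 - hadamard θt g0 =
      hadamard θt (g1 - g0) + hadamard (θt1 - θt) g1 := by
    ext i
    simp only [PiLp.sub_apply, PiLp.add_apply, hadamard_apply]
    ring
  have hb1 : ‖hadamard θt (g1 - g0)‖ ≤ Q * (L₂ * ‖θt - θt1‖) := by
    calc ‖hadamard θt (g1 - g0)‖ ≤ ‖θt‖ * ‖g1 - g0‖ := hadamard_norm_le _ _
      _ ≤ Q * (L₂ * ‖θt - θt1‖) := by
          apply mul_le_mul hθt _ (norm_nonneg _) hQ
          calc ‖g1 - g0‖ ≤ L₂ * ‖mt1 - mt‖ := hgradLip _ _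
            _ = L₂ * ‖mt - mt1‖ := by rw [norm_sub_rev]
            _ ≤ L₂ * ‖θt - θt1‖ := by
                exact mul_le_mul_of_nonneg_left hmnorm hL₂.le
  have hb2 : ‖hadamard (θt1 - θt) g1‖ ≤ ‖θt - θt1‖ * L₁ := by
    calc ‖hadamard (θt1 - θt) g1‖ ≤ ‖θt1 - θt‖ * ‖g1‖ := hadamard_norm_le _ _
      _ ≤ ‖θt1 - θt‖ * L₁ := mul_le_mul_of_nonneg_left (hgradbound _) (norm_nonneg _)
      _ = ‖θt - θt1‖ * L₁ := by rw [norm_sub_rev]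
  have key : ‖hadamard θt1 g1 - hadamard θt g0‖ ≤ (Q * L₂ + L₁) * ‖θt - θt1‖ := by
    rw [hsplit]
    calc ‖hadamard θt (g1 - g0) + hadamard (θt1 - θt) g1‖
        ≤ ‖hadamard θt (g1 - g0)‖ + ‖hadamard (θt1 - θt) g1‖ := norm_add_le _ _
      _ ≤ Q * (L₂ * ‖θt - θt1‖) + ‖θt - θt1‖ * L₁ := add_le_add hb1 hb2
      _ = (Q * L₂ + L₁) * ‖θt - θt1‖ := by ring
  calc β * ‖hadamard θt1 g1 - hadamard θt g0‖
      ≤ β * ((Q * L₂ + L₁) * ‖θt - θt1‖) := mul_le_mul_of_nonneg_left key hβ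
    _ = β * (Q * L₂ + L₁) * ‖θt - θt1‖ := by ring
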